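/- arXiv:2303.06671 — 2 statements merged into one kernel-verified Lean document; each statement's English description precedes it below -/
import Mathlib

section
/- Let H be a complex Hilbert space with inner product ⟨·,·⟩ and let (b_i)_{i∈ℕ} be an orthonormal basis of H. Let (λ_i)_{i∈ℕ} be positive reals with β := inf_i |λ_i - 1|/(λ_i + 1) > 0. Define the sesquilinear form B(u,v) = Σ_i (λ_i - 1)·⟨u,b_i⟩·conj(⟨v,b_i⟩) and the norm ‖u‖_P² = Σ_i (λ_i + 1)·|⟨u,b_i⟩|² (on the subspace where this is finite). Then for every u in that subspace there exists v with ‖v‖_P = ‖u‖_P and Re B(u,v) ≥ β·‖u‖_P², i.e. the inf-sup constant of B with respect to ‖·‖_P is at least β. -/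
/-! Take `v` to be `u` with the coordinates `⟨u, bᵢ⟩` for which `λᵢ < 1` negated. Flipping signs
preserves every `|⟨·, bᵢ⟩|`, hence the `P`-norm, and turns each term of `B(u, v)` into the
nonnegative real `|λᵢ - 1| |⟨u, bᵢ⟩|²`, which dominates `β (λᵢ + 1) |⟨u, bᵢ⟩|²`. -/

open ComplexConjugate

/-- Unlike `Real.sign`, this sends `0` to `1`, so multiplying by it never changes absolute values. -/
noncomputable def unitSign (x : ℝ) : ℝ := if x < 0 then -1 else 1

lemma abs_unitSign (x : ℝ) : |unitSign x| = 1 := by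
  unfold unitSign
  split_ifs <;> simp

lemma mul_unitSign (x : ℝ) : x * unitSign x = |x| := by
  unfold unitSign
  split_ifs with h
  · rw [abs_of_neg h]; ring
  · rw [abs_of_nonneg (not_lt.1 h)]; ring

lemma norm_unitSign_ofReal (x : ℝ) : ‖(unitSign x : ℂ)‖ = 1 := by
  rw [Complex.norm_real, Real.norm_eq_abs, abs_unitSign]

lemma ofReal_mul_mul_conj_unitSign_mul (d : ℝ) (z : ℂ) :
    (d : ℂ) * z * conj ((unitSign d : ℂ) * z) = ((|d| * ‖z‖ ^ 2 : ℝ) : ℂ) := by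
  rw [map_mul, Complex.conj_ofReal, ← mul_unitSign]
  push_cast
  rw [← Complex.mul_conj']
  ring

lemma HilbertBasis.exists_repr_eq_mul {ι 𝕜 E : Type*} [RCLike 𝕜] [NormedAddCommGroup E]
    [InnerProductSpace 𝕜 E] (b : HilbertBasis ι 𝕜 E) (s : ι → 𝕜) (hs : ∀ i, ‖s i‖ ≤ 1)
    (u : E) : ∃ v, ∀ i, b.repr v i = s i * b.repr u i := by
  have hmem : Memℓp (fun i => s i * b.repr u i) 2 :=
    (lp.memℓp (b.repr u)).mono' fun i => by
      rw [norm_mul]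
      exact mul_le_of_le_one_left (norm_nonneg _) (hs i)
  exact ⟨b.repr.symm ⟨_, hmem⟩, fun i => by simp⟩

lemma abs_sub_one_le_add_one {x : ℝ} (hx : 0 ≤ x) : |x - 1| ≤ x + 1 :=
  abs_sub_le_iff.2 ⟨by linarith, by linarith⟩

theorem acms_inf_sup_general
    {H : Type*} [NormedAddCommGroup H] [InnerProductSpace ℂ H]
    (b : HilbertBasis ℕ ℂ H) (lam : ℕ → ℝ) (hlam : ∀ i, 0 < lam i)
    (β : ℝ) (hβinf : ∀ i, β ≤ |lam i - 1| / (lam i + 1))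
    (u : H) (hu : Summable (fun i => (lam i + 1) * ‖b.repr u i‖ ^ 2)) :
    ∃ v : H,
      Summable (fun i => (lam i + 1) * ‖b.repr v i‖ ^ 2) ∧
      (∑' i, (lam i + 1) * ‖b.repr v i‖ ^ 2) = (∑' i, (lam i + 1) * ‖b.repr u i‖ ^ 2) ∧
      Summable (fun i => ((lam i : ℂ) - 1) * b.repr u i * (starRingEnd ℂ) (b.repr v i)) ∧
      β * (∑' i, (lam i + 1) * ‖b.repr u i‖ ^ 2) ≤
        (∑' i, ((lam i : ℂ) - 1) * b.repr u i * (starRingEnd ℂ) (b.repr v i)).re := by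
  obtain ⟨v, hv⟩ := b.exists_repr_eq_mul (fun i => (unitSign (lam i - 1) : ℂ))
    (fun i => (norm_unitSign_ofReal _).le) u
  have hnorm (i : ℕ) : ‖b.repr v i‖ = ‖b.repr u i‖ := by
    rw [hv, norm_mul, norm_unitSign_ofReal, one_mul]
  have hterm (i : ℕ) : ((lam i : ℂ) - 1) * b.repr u i * conj (b.repr v i) =
      ((|lam i - 1| * ‖b.repr u i‖ ^ 2 : ℝ) : ℂ) := by
    rw [hv]
    exact_mod_cast ofReal_mul_mul_conj_unitSign_mul (lam i - 1) (b.repr u i)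
  have hsum : Summable fun i => |lam i - 1| * ‖b.repr u i‖ ^ 2 :=
    Summable.of_nonneg_of_le (fun _ => by positivity)
      (fun i => by gcongr; exact abs_sub_one_le_add_one (hlam i).le) hu
  refine ⟨v, hu.congr fun i => by rw [hnorm], tsum_congr fun i => by rw [hnorm],
    (Complex.summable_ofReal.2 hsum).congr fun i => (hterm i).symm, ?_⟩
  rw [tsum_congr hterm, ← Complex.ofReal_tsum, Complex.ofReal_re, ← tsum_mul_left]
  refine (hu.mul_left β).tsum_le_tsum (fun i => ?_) hsum
  rw [← mul_assoc]
  gcongr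
  exact (le_div_iff₀ (by linarith [hlam i])).1 (hβinf i)

/-- Inf-sup stability of the spectrally diagonalized Helmholtz form
`B(u,v) = ∑ (λᵢ - 1) ⟨u,bᵢ⟩ conj ⟨v,bᵢ⟩` with respect to the norm
`‖u‖_P² = ∑ (λᵢ + 1) |⟨u,bᵢ⟩|²`: for every `u` in the domain there is `v`
with `‖v‖_P = ‖u‖_P` and `Re B(u,v) ≥ β ‖u‖_P²`. -/
theorem acms_inf_sup
    {H : Type*} [NormedAddCommGroup H] [InnerProductSpace ℂ H] [CompleteSpace H]
    (b : HilbertBasis ℕ ℂ H) (lam : ℕ → ℝ) (hlam : ∀ i, 0 < lam i)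
    (β : ℝ) (hβ : 0 < β) (hβinf : ∀ i, β ≤ |lam i - 1| / (lam i + 1))
    (u : H) (hu : Summable (fun i => (lam i + 1) * ‖b.repr u i‖ ^ 2)) :
    ∃ v : H,
      Summable (fun i => (lam i + 1) * ‖b.repr v i‖ ^ 2) ∧
      (∑' i, (lam i + 1) * ‖b.repr v i‖ ^ 2) = (∑' i, (lam i + 1) * ‖b.repr u i‖ ^ 2) ∧
      Summable (fun i => ((lam i : ℂ) - 1) * b.repr u i * (starRingEnd ℂ) (b.repr v i)) ∧
      β * (∑' i, (lam i + 1) * ‖b.repr u i‖ ^ 2) ≤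
        (∑' i, ((lam i : ℂ) - 1) * b.repr u i * (starRingEnd ℂ) (b.repr v i)).re :=
  acms_inf_sup_general b lam hlam β hβinf u hu
end

section
/- Let e = (0,ℓ), τ_j the Dirichlet Laplace eigenfunctions with eigenvalues λ_j, and P_N the L² projection onto the first N modes. For w ∈ H¹₀(e) ∩ H³(e), assuming |τ_j'(0)|, |τ_j'(ℓ)| ≤ C√λ_j for all j, one has for every j > N: |(w'', τ_j)_{L²(e)}| ≤ (1/λ_j)·( ‖w'''‖_{L²(e)}·‖τ_j'‖_{L²(e)} + C√λ_j·(|w''(0)| + |w''(ℓ)|) ), and consequently |(w'',τ_j)| ≤ C'·λ_j^{-1/2}·‖w‖_{H³(e)}. -/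
/-!
Since `-τ_j'' = λ_j τ_j`, one integration by parts gives
`λ_j (w'', τ_j) = (w''', τ_j') - [w'' τ_j']₀^ℓ`. Cauchy–Schwarz bounds the integral by
`‖w'''‖ ‖τ_j'‖ = ‖w'''‖ √λ_j`, and the hypothesis on `τ_j'` bounds the boundary term by
`C √λ_j (|w''(0)| + |w''(ℓ)|)`. The endpoint values of `w''` are controlled by `‖w''‖_{H¹}`
through the embedding `H¹ ↪ C⁰`: integrate `(|f|²)' = 2 Re (f̄ f')` from a point where `|f|²`
equals its mean.
-/

open Real MeasureTheory intervalIntegral Set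

theorem aestronglyMeasurable_of_forall_hasDerivAt {F : Type*} [NormedAddCommGroup F]
    [NormedSpace ℝ F] [CompleteSpace F] {f f' : ℝ → F} {s : Set ℝ} (hs : MeasurableSet s)
    (hf : ∀ x ∈ s, HasDerivAt f (f' x) x) : AEStronglyMeasurable f' (volume.restrict s) :=
  (aestronglyMeasurable_deriv f _).congr <|
    (ae_restrict_iff' hs).2 <| .of_forall fun x hx => (hf x hx).deriv

theorem IntervalIntegrable.of_norm_sq {F : Type*} [NormedAddCommGroup F] {f : ℝ → F} {a b : ℝ}
    (hab : a ≤ b) (hf : AEStronglyMeasurable f (volume.restrict (Ioc a b)))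
    (hf2 : IntervalIntegrable (fun x => ‖f x‖ ^ 2) volume a b) :
    IntervalIntegrable f volume a b := by
  rw [intervalIntegrable_iff_integrableOn_Ioc_of_le hab] at hf2 ⊢
  exact ((memLp_two_iff_integrable_sq_norm hf).2 hf2).integrable one_le_two

theorem integral_mul_le_sqrt_integral_sq_mul_sqrt_integral_sq {a b : ℝ} (hab : a ≤ b)
    {f g : ℝ → ℝ} (hf0 : ∀ x, 0 ≤ f x) (hg0 : ∀ x, 0 ≤ g x)
    (hf : AEStronglyMeasurable f (volume.restrict (Ioc a b)))
    (hg : AEStronglyMeasurable g (volume.restrict (Ioc a b)))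
    (hf2 : IntervalIntegrable (fun x => f x ^ 2) volume a b)
    (hg2 : IntervalIntegrable (fun x => g x ^ 2) volume a b) :
    ∫ x in a..b, f x * g x ≤ √(∫ x in a..b, f x ^ 2) * √(∫ x in a..b, g x ^ 2) := by
  rw [intervalIntegrable_iff_integrableOn_Ioc_of_le hab] at hf2 hg2
  have hfL : MemLp f (ENNReal.ofReal 2) (volume.restrict (Ioc a b)) := by
    simpa using (memLp_two_iff_integrable_sq hf).2 hf2
  have hgL : MemLp g (ENNReal.ofReal 2) (volume.restrict (Ioc a b)) := by
    simpa using (memLp_two_iff_integrable_sq hg).2 hg2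
  have h := integral_mul_le_Lp_mul_Lq_of_nonneg .two_two (.of_forall hf0) (.of_forall hg0) hfL hgL
  simpa only [← integral_of_le hab, ← sqrt_eq_rpow, rpow_two] using h

theorem norm_integral_mul_ofReal_le {a b : ℝ} (hab : a ≤ b) {f : ℝ → ℂ} {g : ℝ → ℝ}
    (hf : AEStronglyMeasurable f (volume.restrict (Ioc a b)))
    (hg : ContinuousOn g (Icc a b))
    (hf2 : IntervalIntegrable (fun x => ‖f x‖ ^ 2) volume a b) :
    ‖∫ x in a..b, f x * (g x : ℂ)‖ ≤ √(∫ x in a..b, ‖f x‖ ^ 2) * √(∫ x in a..b, g x ^ 2) := by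
  have hg2 : IntervalIntegrable (fun x => |g x| ^ 2) volume a b := by
    simpa only [sq_abs] using (hg.pow 2).intervalIntegrable_of_Icc hab (u := fun x => g x ^ 2)
  calc ‖∫ x in a..b, f x * (g x : ℂ)‖ ≤ ∫ x in a..b, ‖f x‖ * |g x| := by
        simpa only [norm_mul, Complex.norm_real, Real.norm_eq_abs]
          using norm_integral_le_integral_norm (f := fun x => f x * (g x : ℂ)) hab
    _ ≤ √(∫ x in a..b, ‖f x‖ ^ 2) * √(∫ x in a..b, |g x| ^ 2) :=
        integral_mul_le_sqrt_integral_sq_mul_sqrt_integral_sq hab (fun _ => norm_nonneg _)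
          (fun _ => abs_nonneg _) hf.norm
          ((hg.mono Ioc_subset_Icc_self).abs.aestronglyMeasurable measurableSet_Ioc) hf2 hg2
    _ = √(∫ x in a..b, ‖f x‖ ^ 2) * √(∫ x in a..b, g x ^ 2) := by simp only [sq_abs]

section Sobolev

variable {E : Type*} [NormedAddCommGroup E] [InnerProductSpace ℝ E] {f f' : ℝ → E} {a b : ℝ}

theorem abs_two_mul_inner_le_norm_sq_add_norm_sq (x y : E) :
    |2 * inner ℝ x y| ≤ ‖x‖ ^ 2 + ‖y‖ ^ 2 := by
  rw [abs_mul, abs_two]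
  nlinarith [abs_real_inner_le_norm x y, sq_nonneg (‖x‖ - ‖y‖)]

theorem norm_sq_sub_norm_sq_le_integral (hab : a ≤ b)
    (hf : ∀ x ∈ Icc a b, HasDerivAt f (f' x) x)
    (hf'2 : IntervalIntegrable (fun x => ‖f' x‖ ^ 2) volume a b)
    {x y : ℝ} (hx : x ∈ Icc a b) (hy : y ∈ Icc a b) :
    ‖f x‖ ^ 2 - ‖f y‖ ^ 2 ≤ ∫ t in a..b, (‖f t‖ ^ 2 + ‖f' t‖ ^ 2) := by
  have hG : ∀ t ∈ Icc a b, HasDerivAt (fun t => ‖f t‖ ^ 2) (2 * inner ℝ (f t) (f' t)) t :=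
    fun t ht => (hf t ht).norm_sq
  have hdom : IntervalIntegrable (fun t => ‖f t‖ ^ 2 + ‖f' t‖ ^ 2) volume a b :=
    (ContinuousOn.intervalIntegrable_of_Icc hab fun t ht =>
      (hG t ht).continuousAt.continuousWithinAt).add hf'2
  have hGint : IntervalIntegrable (fun t => 2 * inner ℝ (f t) (f' t)) volume a b := by
    refine hdom.mono_fun ?_ (.of_forall fun t => ?_)
    · rw [uIoc_of_le hab]
      exact aestronglyMeasurable_of_forall_hasDerivAt measurableSet_Ioc
        fun t ht => hG t (Ioc_subset_Icc_self ht)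
    · simpa only [Real.norm_eq_abs, abs_of_nonneg (by positivity : 0 ≤ ‖f t‖ ^ 2 + ‖f' t‖ ^ 2)]
        using abs_two_mul_inner_le_norm_sq_add_norm_sq (f t) (f' t)
  have hsub : uIcc y x ⊆ Icc a b := uIcc_subset_Icc hy hx
  rw [← integral_eq_sub_of_hasDerivAt (fun t ht => hG t (hsub ht))
    (hGint.mono_set (by rwa [uIcc_of_le hab]))]
  calc ∫ t in y..x, 2 * inner ℝ (f t) (f' t)
      ≤ ∫ t in uIoc y x, |2 * inner ℝ (f t) (f' t)| := (le_abs_self _).trans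
        (by simpa only [Real.norm_eq_abs] using norm_integral_le_integral_norm_uIoc (f := fun t => 2 * inner ℝ (f t) (f' t)))
    _ ≤ ∫ t in Ioc a b, |2 * inner ℝ (f t) (f' t)| := by
        refine setIntegral_mono_set ((intervalIntegrable_iff_integrableOn_Ioc_of_le hab).1
          hGint.abs) (.of_forall fun t => abs_nonneg _) (.of_forall fun t ht => ?_)
        exact Ioc_subset_Ioc (le_min hy.1 hx.1) (max_le hy.2 hx.2) ht
    _ ≤ ∫ t in a..b, (‖f t‖ ^ 2 + ‖f' t‖ ^ 2) := by
        rw [integral_of_le hab]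
        refine setIntegral_mono_on ?_ ?_ measurableSet_Ioc fun t _ =>
          abs_two_mul_inner_le_norm_sq_add_norm_sq (f t) (f' t)
        · exact (intervalIntegrable_iff_integrableOn_Ioc_of_le hab).1 hGint.abs
        · exact (intervalIntegrable_iff_integrableOn_Ioc_of_le hab).1 hdom

theorem norm_le_sqrt_mul_sqrt_integral_add_integral_deriv (hab : a < b)
    (hf : ∀ x ∈ Icc a b, HasDerivAt f (f' x) x)
    (hf'2 : IntervalIntegrable (fun x => ‖f' x‖ ^ 2) volume a b) {x : ℝ} (hx : x ∈ Icc a b) :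
    ‖f x‖ ≤ √(1 / (b - a) + 1) * √((∫ t in a..b, ‖f t‖ ^ 2) + ∫ t in a..b, ‖f' t‖ ^ 2) := by
  have hfc : ContinuousOn (fun t => ‖f t‖ ^ 2) (Icc a b) := fun t ht =>
    (hf t ht).continuousAt.norm.pow 2 |>.continuousWithinAt
  obtain ⟨y, hy, hy_avg⟩ := exists_eq_interval_average hab.ne (by rwa [uIcc_of_le hab.le])
  rw [interval_average_eq_div] at hy_avg
  have hy' : y ∈ Icc a b := by
    rw [uIoo_of_le hab.le] at hy
    exact Ioo_subset_Icc_self hy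
  have hdiff := norm_sq_sub_norm_sq_le_integral hab.le hf hf'2 hx hy'
  rw [integral_add (hfc.intervalIntegrable_of_Icc hab.le) hf'2] at hdiff
  have hI : 0 ≤ ∫ t in a..b, ‖f t‖ ^ 2 := integral_nonneg hab.le fun t _ => by positivity
  have hI' : 0 ≤ ∫ t in a..b, ‖f' t‖ ^ 2 := integral_nonneg hab.le fun t _ => by positivity
  rw [← sqrt_mul (by positivity), ← sqrt_sq (norm_nonneg (f x))]
  refine sqrt_le_sqrt ?_
  have hba : 0 < 1 / (b - a) := by simpa using hab
  rw [hy_avg, div_eq_mul_one_div, mul_comm] at hdiff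
  nlinarith

end Sobolev

section Eigenfunction

variable {a b lam : ℝ} {u u' : ℝ → ℂ} {φ φ' : ℝ → ℝ}

theorem mul_integral_mul_eigenfunction_eq (hab : a ≤ b)
    (hu : ∀ x ∈ Icc a b, HasDerivAt u (u' x) x) (hφ : ∀ x ∈ Icc a b, HasDerivAt φ (φ' x) x)
    (hφ' : ∀ x ∈ Icc a b, HasDerivAt φ' (-lam * φ x) x)
    (hu' : IntervalIntegrable u' volume a b) :
    (lam : ℂ) * ∫ x in a..b, u x * (φ x : ℂ) =
      (∫ x in a..b, u' x * (φ' x : ℂ)) - (u b * φ' b - u a * φ' a) := by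
  have hφc : ContinuousOn φ (Icc a b) := fun x hx => (hφ x hx).continuousAt.continuousWithinAt
  have hibp := integral_mul_deriv_eq_deriv_mul (v := fun x => (φ' x : ℂ))
    (v' := fun x => ((-lam * φ x : ℝ) : ℂ)) (by rwa [uIcc_of_le hab])
    (fun x hx => (hφ' x (by rwa [uIcc_of_le hab] at hx)).ofReal_comp)
    hu' ((Complex.continuous_ofReal.comp_continuousOn
      (continuousOn_const.mul hφc)).intervalIntegrable_of_Icc hab)
  have hpull : ∫ x in a..b, u x * ((-lam * φ x : ℝ) : ℂ) =
      -(lam : ℂ) * ∫ x in a..b, u x * (φ x : ℂ) := by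
    rw [← intervalIntegral.integral_const_mul]
    congr 1 with x
    push_cast
    ring
  rw [hpull] at hibp
  linear_combination -hibp

theorem abs_mul_norm_integral_mul_eigenfunction_le (hab : a ≤ b)
    (hu : ∀ x ∈ Icc a b, HasDerivAt u (u' x) x) (hφ : ∀ x ∈ Icc a b, HasDerivAt φ (φ' x) x)
    (hφ' : ∀ x ∈ Icc a b, HasDerivAt φ' (-lam * φ x) x)
    (hu'2 : IntervalIntegrable (fun x => ‖u' x‖ ^ 2) volume a b) :
    |lam| * ‖∫ x in a..b, u x * (φ x : ℂ)‖ ≤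
      √(∫ x in a..b, ‖u' x‖ ^ 2) * √(∫ x in a..b, φ' x ^ 2) +
        (‖u a‖ * |φ' a| + ‖u b‖ * |φ' b|) := by
  have hu'm : AEStronglyMeasurable u' (volume.restrict (Ioc a b)) :=
    aestronglyMeasurable_of_forall_hasDerivAt measurableSet_Ioc
      fun x hx => hu x (Ioc_subset_Icc_self hx)
  have hφ'c : ContinuousOn φ' (Icc a b) := fun x hx => (hφ' x hx).continuousAt.continuousWithinAt
  rw [← Real.norm_eq_abs, ← Complex.norm_real, ← norm_mul, mul_integral_mul_eigenfunction_eq hab hu hφ hφ'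
    (hu'2.of_norm_sq hab hu'm)]
  refine (norm_sub_le _ _).trans (add_le_add
    (norm_integral_mul_ofReal_le hab hu'm hφ'c hu'2) ?_)
  refine (norm_sub_le _ _).trans_eq ?_
  simp only [norm_mul, Complex.norm_real, Real.norm_eq_abs]
  ring

end Eigenfunction

theorem edge_mode_H3_coefficient_bound_general
    (ℓ : ℝ) (hℓ : 0 < ℓ)
    (τ τ' : ℕ → ℝ → ℝ) (lam : ℕ → ℝ)
    (hpos : ∀ j, 0 < lam j)
    (hτ' : ∀ j, ∀ x ∈ Set.Icc 0 ℓ, HasDerivAt (τ j) (τ' j x) x)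
    (hτ'' : ∀ j, ∀ x ∈ Set.Icc 0 ℓ, HasDerivAt (τ' j) (-(lam j) * τ j x) x)
    (hnorm' : ∀ j, (∫ x in (0:ℝ)..ℓ, (τ' j x) ^ 2) = lam j)
    (C : ℝ) (hC : 0 < C)
    (hbd0 : ∀ j, |τ' j 0| ≤ C * Real.sqrt (lam j))
    (hbdℓ : ∀ j, |τ' j ℓ| ≤ C * Real.sqrt (lam j)) :
    ∃ C' > 0, ∀ (w w' w'' w''' : ℝ → ℂ),
      (∀ x ∈ Set.Icc 0 ℓ, HasDerivAt w (w' x) x) →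
      (∀ x ∈ Set.Icc 0 ℓ, HasDerivAt w' (w'' x) x) →
      (∀ x ∈ Set.Icc 0 ℓ, HasDerivAt w'' (w''' x) x) →
      IntervalIntegrable (fun x => ‖w''' x‖ ^ 2) volume 0 ℓ →
      w 0 = 0 → w ℓ = 0 →
      ∀ (N j : ℕ), N < j →
        ‖∫ x in (0:ℝ)..ℓ, w'' x * ((τ j x : ℝ) : ℂ)‖ ≤
          (1 / lam j) *
            (Real.sqrt (∫ x in (0:ℝ)..ℓ, ‖w''' x‖ ^ 2) *
                Real.sqrt (∫ x in (0:ℝ)..ℓ, (τ' j x) ^ 2) +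
              C * Real.sqrt (lam j) * (‖w'' 0‖ + ‖w'' ℓ‖)) ∧
        ‖∫ x in (0:ℝ)..ℓ, w'' x * ((τ j x : ℝ) : ℂ)‖ ≤
          C' * (1 / Real.sqrt (lam j)) *
            Real.sqrt ((∫ x in (0:ℝ)..ℓ, ‖w x‖ ^ 2) + (∫ x in (0:ℝ)..ℓ, ‖w' x‖ ^ 2) +
              (∫ x in (0:ℝ)..ℓ, ‖w'' x‖ ^ 2) + ∫ x in (0:ℝ)..ℓ, ‖w''' x‖ ^ 2) := by
  set K := √(1 / ℓ + 1)
  refine ⟨1 + 2 * C * K, by positivity, fun w w' w'' w''' _ _ hw'' hw''' _ _ N j _ => ?_⟩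
  have hlam := hpos j
  have hbound : ‖∫ x in (0:ℝ)..ℓ, w'' x * ((τ j x : ℝ) : ℂ)‖ ≤ (1 / lam j) *
      (√(∫ x in (0:ℝ)..ℓ, ‖w''' x‖ ^ 2) * √(∫ x in (0:ℝ)..ℓ, (τ' j x) ^ 2) +
        C * √(lam j) * (‖w'' 0‖ + ‖w'' ℓ‖)) := by
    have h := abs_mul_norm_integral_mul_eigenfunction_le hℓ.le hw'' (hτ' j) (hτ'' j) hw'''
    rw [abs_of_pos hlam] at h
    rw [one_div_mul_eq_div, le_div_iff₀' hlam]
    nlinarith [hbd0 j, hbdℓ j, norm_nonneg (w'' 0), norm_nonneg (w'' ℓ)]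
  refine ⟨hbound, hbound.trans ?_⟩
  set S := (∫ x in (0:ℝ)..ℓ, ‖w x‖ ^ 2) + (∫ x in (0:ℝ)..ℓ, ‖w' x‖ ^ 2) +
    (∫ x in (0:ℝ)..ℓ, ‖w'' x‖ ^ 2) + ∫ x in (0:ℝ)..ℓ, ‖w''' x‖ ^ 2
  have hnonneg (g : ℝ → ℂ) : 0 ≤ ∫ x in (0:ℝ)..ℓ, ‖g x‖ ^ 2 :=
    integral_nonneg hℓ.le fun _ _ => by positivity
  have hw'''S : √(∫ x in (0:ℝ)..ℓ, ‖w''' x‖ ^ 2) ≤ √S :=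
    sqrt_le_sqrt (by linarith [hnonneg w, hnonneg w', hnonneg w''])
  have hw''S (x : ℝ) (hx : x ∈ Icc 0 ℓ) : ‖w'' x‖ ≤ K * √S := by
    refine (norm_le_sqrt_mul_sqrt_integral_add_integral_deriv hℓ hw'' hw''' hx).trans ?_
    rw [sub_zero]
    gcongr
    linarith [hnonneg w, hnonneg w']
  rw [hnorm' j]
  calc (1 / lam j) * (√(∫ x in (0:ℝ)..ℓ, ‖w''' x‖ ^ 2) * √(lam j) +
        C * √(lam j) * (‖w'' 0‖ + ‖w'' ℓ‖))
      ≤ (1 / lam j) * (√S * √(lam j) + C * √(lam j) * (K * √S + K * √S)) := by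
        gcongr
        exacts [hw''S 0 (left_mem_Icc.2 hℓ.le), hw''S ℓ (right_mem_Icc.2 hℓ.le)]
    _ = (1 + 2 * C * K) * (1 / √(lam j)) * √S := by
        have hsqrt : 0 < √(lam j) := sqrt_pos.2 hlam
        field_simp
        rw [sq_sqrt hlam.le]
        ring

/-- Key computation of Lemma 4.4 (improved_rate_interface): for Dirichlet eigenfunctions
`τ_j` on `(0,ℓ)` with `|τ_j'(0)|, |τ_j'(ℓ)| ≤ C √λ_j`, and `w ∈ H¹₀ ∩ H³`, one has for `j > N`
`|(w'',τ_j)| ≤ λ_j⁻¹ (‖w'''‖_{L²} ‖τ_j'‖_{L²} + C √λ_j (|w''(0)| + |w''(ℓ)|))`, and consequently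
`|(w'',τ_j)| ≤ C' λ_j^{-1/2} ‖w‖_{H³}`. -/
theorem edge_mode_H3_coefficient_bound
    (ℓ : ℝ) (hℓ : 0 < ℓ)
    (τ τ' : ℕ → ℝ → ℝ) (lam : ℕ → ℝ)
    (hpos : ∀ j, 0 < lam j) (hmono : Monotone lam)
    (hτ' : ∀ j, ∀ x ∈ Set.Icc 0 ℓ, HasDerivAt (τ j) (τ' j x) x)
    (hτ'' : ∀ j, ∀ x ∈ Set.Icc 0 ℓ, HasDerivAt (τ' j) (-(lam j) * τ j x) x)
    (hτ0 : ∀ j, τ j 0 = 0) (hτℓ : ∀ j, τ j ℓ = 0)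
    (hnorm : ∀ j, (∫ x in (0:ℝ)..ℓ, (τ j x) ^ 2) = 1)
    (hnorm' : ∀ j, (∫ x in (0:ℝ)..ℓ, (τ' j x) ^ 2) = lam j)
    (C : ℝ) (hC : 0 < C)
    (hbd0 : ∀ j, |τ' j 0| ≤ C * Real.sqrt (lam j))
    (hbdℓ : ∀ j, |τ' j ℓ| ≤ C * Real.sqrt (lam j)) :
    ∃ C' > 0, ∀ (w w' w'' w''' : ℝ → ℂ),
      (∀ x ∈ Set.Icc 0 ℓ, HasDerivAt w (w' x) x) →
      (∀ x ∈ Set.Icc 0 ℓ, HasDerivAt w' (w'' x) x) →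
      (∀ x ∈ Set.Icc 0 ℓ, HasDerivAt w'' (w''' x) x) →
      IntervalIntegrable (fun x => ‖w''' x‖ ^ 2) volume 0 ℓ →
      w 0 = 0 → w ℓ = 0 →
      ∀ (N j : ℕ), N < j →
        ‖∫ x in (0:ℝ)..ℓ, w'' x * ((τ j x : ℝ) : ℂ)‖ ≤
          (1 / lam j) *
            (Real.sqrt (∫ x in (0:ℝ)..ℓ, ‖w''' x‖ ^ 2) *
                Real.sqrt (∫ x in (0:ℝ)..ℓ, (τ' j x) ^ 2) +
              C * Real.sqrt (lam j) * (‖w'' 0‖ + ‖w'' ℓ‖)) ∧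
        ‖∫ x in (0:ℝ)..ℓ, w'' x * ((τ j x : ℝ) : ℂ)‖ ≤
          C' * (1 / Real.sqrt (lam j)) *
            Real.sqrt ((∫ x in (0:ℝ)..ℓ, ‖w x‖ ^ 2) + (∫ x in (0:ℝ)..ℓ, ‖w' x‖ ^ 2) +
              (∫ x in (0:ℝ)..ℓ, ‖w'' x‖ ^ 2) + ∫ x in (0:ℝ)..ℓ, ‖w''' x‖ ^ 2) :=
  edge_mode_H3_coefficient_bound_general ℓ hℓ τ τ' lam hpos hτ' hτ'' hnorm' C hC hbd0 hbdℓ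
end
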